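/- Let 𝒜 = ⟨A,R⟩ be an almost bounded structure and 𝒜^* any ultrapower of 𝒜. For every formula φ(x̄) of L_R, every tuple [ā]_𝒟 from A^*, and every tuple ū from Uf(A): (i) 𝒜^* ⊨ φ([ā]_𝒟) iff 𝒜^♯ ⊨ φ^♯([ā]_𝒟); (ii) 𝒜^ue ⊨ φ(ū) iff 𝒜^♭ ⊨ φ^♯(ū). -/

import Mathlib

open FirstOrder Cardinal

namespace UEx

/-- Elements of infinite in- or out-degree. -/
def RInf (R : A → A → Prop) : Set A :=
  {w | {v | R w v}.Infinite ∨ {v | R v w}.Infinite}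

/-- A uniform finite bound on all in- and out-degrees. -/
def Bounded (R : A → A → Prop) : Prop :=
  ∃ n : ℕ, ∀ w : A, {v | R w v}.Finite ∧ {v | R v w}.Finite ∧
    {v | R w v}.ncard ≤ n ∧ {v | R v w}.ncard ≤ n

/-- Almost bounded: finitely many elements of infinite degree, and a uniform
finite bound on the degrees of the remaining elements. -/
def AlmostBounded (R : A → A → Prop) : Prop :=
  (RInf R).Finite ∧ ∃ n : ℕ, ∀ w ∉ RInf R,
    {v | R w v}.ncard ≤ n ∧ {v | R v w}.ncard ≤ n

/-- P = {(s,t) ∈ R : s ∈ R∞ or t ∈ R∞}. -/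
def PRel (R : A → A → Prop) (s t : A) : Prop := R s t ∧ (s ∈ RInf R ∨ t ∈ RInf R)

/-- S = R \ P. -/
def SRel (R : A → A → Prop) (s t : A) : Prop := R s t ∧ ¬(s ∈ RInf R ∨ t ∈ RInf R)

/-- The ultrafilter extension of a binary relation. -/
def ueRel (Q : A → A → Prop) (u v : Ultrafilter A) : Prop :=
  ∀ X ∈ v, {w | ∃ s ∈ X, Q w s} ∈ u

/-- The setoid of 𝒟-a.e. equality on `I → A`. -/
def upSetoid (𝒟 : Ultrafilter I) (A : Type*) : Setoid (I → A) where
  r a b := {i | a i = b i} ∈ 𝒟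
  iseqv := by
    refine ⟨fun a => ?_, fun {a b} h => ?_, fun {a b c} h1 h2 => ?_⟩
    · have : {i | a i = a i} = (Set.univ : Set I) := by simp
      rw [this]
      exact Filter.univ_mem
    · exact Filter.mem_of_superset h fun i hi => (hi : _ = _).symm
    · exact Filter.mem_of_superset (Filter.inter_mem h1 h2) fun i hi =>
        (hi.1 : _ = _).trans hi.2

/-- The ultrapower of `A` modulo the ultrafilter `𝒟`. -/
def UP (𝒟 : Ultrafilter I) (A : Type*) : Type _ := Quotient (upSetoid 𝒟 A)

/-- The diagonal embedding into the ultrapower. -/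
def diag (𝒟 : Ultrafilter I) (a : A) : UP 𝒟 A := Quotient.mk (upSetoid 𝒟 A) fun _ => a

/-- The relation on the ultrapower given by Łoś's theorem. -/
def upRel (𝒟 : Ultrafilter I) (Q : A → A → Prop) : UP 𝒟 A → UP 𝒟 A → Prop :=
  Quotient.lift₂ (fun a b => {i | Q (a i) (b i)} ∈ 𝒟) <| by
    intro a b a' b' ha hb
    have ha' : {i | a i = a' i} ∈ 𝒟 := ha
    have hb' : {i | b i = b' i} ∈ 𝒟 := hb
    refine propext ⟨fun h => ?_, fun h => ?_⟩
    · refine Filter.mem_of_superset (Filter.inter_mem (Filter.inter_mem h ha') hb') ?_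
      rintro i ⟨⟨h1, h2⟩, h3⟩
      simp only [Set.mem_setOf_eq] at *
      rw [← h2, ← h3]; exact h1
    · refine Filter.mem_of_superset (Filter.inter_mem (Filter.inter_mem h ha') hb') ?_
      rintro i ⟨⟨h1, h2⟩, h3⟩
      simp only [Set.mem_setOf_eq] at *
      rw [h2, h3]; exact h1

/-- `𝒟` is `κ`-regular. -/
def IsRegular (𝒟 : Ultrafilter I) (κ : Cardinal) : Prop :=
  ∃ E : Set (Set I), (∀ X ∈ E, X ∈ 𝒟) ∧ #E = κ ∧ ∀ i : I, {X ∈ E | i ∈ X}.Finite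

/-- A first-order language with constant symbols indexed by `Consts` and binary
relation symbols indexed by `Rels`. -/
def Lang (Consts Rels : Type*) : Language :=
  ⟨fun n => match n with | 0 => Consts | _ + 1 => PEmpty,
   fun n => match n with | 2 => Rels | _ => PEmpty⟩

/-- A structure for `Lang Consts Rels` from interpretations of the constants and
the binary relations. -/
def mkStruct {Consts Rels B : Type*} (cs : Consts → B) (rs : Rels → B → B → Prop) :
    (Lang Consts Rels).Structure B where
  funMap {n} f _x :=
    match n, f with
    | 0, c => cs c
    | _ + 1, f => PEmpty.elim f
  RelMap {n} r x :=
    match n, r with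
    | 0, r => PEmpty.elim r
    | 1, r => PEmpty.elim r
    | 2, r => rs r (x 0) (x 1)
    | _ + 3, r => PEmpty.elim r

/-- The language with a single binary relation symbol. -/
abbrev L2 : Language := Lang Empty Unit

/-- The structure on `B` in the language of a single binary relation symbol,
interpreted by `Q`. -/
def struct2 {B : Type*} (Q : B → B → Prop) : L2.Structure B :=
  mkStruct Empty.elim fun _ => Q

/-- The `L_R`-structure (`R` together with constants for `R_∞`) on the ultrafilter
extension: `R` is interpreted as `R^ue`, the constant `d_w` as `π_w`. -/
def structRue {A : Type*} (R : A → A → Prop) :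
    (Lang (RInf R) Unit).Structure (Ultrafilter A) :=
  mkStruct (fun c => pure (c : A)) fun _ => ueRel R

/-- The `L_{S,P}`-structure `𝒜^♭` on the ultrafilter extension: `true` is interpreted
as `S^ue`, `false` as `P^ue`, and the constant `d_w` as `π_w`. -/
def structSPue {A : Type*} (R : A → A → Prop) :
    (Lang (RInf R) Bool).Structure (Ultrafilter A) :=
  mkStruct (fun c => pure (c : A)) fun b => cond b (ueRel (SRel R)) (ueRel (PRel R))

/-- The `L_R`-structure on the ultrapower: `R` is interpreted as `R^*` and the
constant `d_w` as the diagonal image of `w`. -/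
def structRup {A I : Type*} (R : A → A → Prop) (𝒟 : Ultrafilter I) :
    (Lang (RInf R) Unit).Structure (UP 𝒟 A) :=
  mkStruct (fun c => diag 𝒟 (c : A)) fun _ => upRel 𝒟 R

/-- The `L_{S,P}`-structure `𝒜^♯` on the ultrapower: `true` is interpreted as `S^*`,
`false` as `P^*`, and the constant `d_w` as the diagonal image of `w`. -/
def structSPup {A I : Type*} (R : A → A → Prop) (𝒟 : Ultrafilter I) :
    (Lang (RInf R) Bool).Structure (UP 𝒟 A) :=
  mkStruct (fun c => diag 𝒟 (c : A)) fun b => cond b (upRel 𝒟 (SRel R)) (upRel 𝒟 (PRel R))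

/-- Translation of terms of `L_R` into terms of `L_{S,P}` (the two languages have
the same constant symbols). -/
def tmap {Co α : Type*} : (Lang Co Unit).Term α → (Lang Co Bool).Term α
  | .var x => .var x
  | .func f ts => .func f fun i => tmap (ts i)

/-- The translation `(·)^♯` from `L_R`-formulas to `L_{S,P}`-formulas: it fixes
equalities, commutes with connectives and quantifiers, and replaces `R(τ₁,τ₂)`
by `S(τ₁,τ₂) ∨ P(τ₁,τ₂)`. -/
def fmap {Co α : Type*} : ∀ {n : ℕ},
    (Lang Co Unit).BoundedFormula α n → (Lang Co Bool).BoundedFormula α n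
  | _, .falsum => .falsum
  | _, .equal t₁ t₂ => .equal (tmap t₁) (tmap t₂)
  | _, .rel (l := l) r ts =>
    match l, r, ts with
    | 2, _, ts =>
        (Language.BoundedFormula.rel (show (Lang Co Bool).Relations 2 from true) fun i => tmap (ts i)) ⊔
        (Language.BoundedFormula.rel (show (Lang Co Bool).Relations 2 from false) fun i => tmap (ts i))
    | 0, r, _ => PEmpty.elim r
    | 1, r, _ => PEmpty.elim r
    | _ + 3, r, _ => PEmpty.elim r
  | _, .imp f₁ f₂ => (fmap f₁).imp (fmap f₂)
  | _, .all f => (fmap f).all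
/-- The transfer property of the translation `(·)^♯`: (i) `𝒜^* ⊨ φ([ā])` iff
`𝒜^♯ ⊨ φ^♯([ā])`; (ii) `𝒜^ue ⊨ φ(ū)` iff `𝒜^♭ ⊨ φ^♯(ū)`. -/

lemma R_iff {A : Type*} (R : A → A → Prop) (x y : A) :
    R x y ↔ SRel R x y ∨ PRel R x y := by
  by_cases h : x ∈ RInf R ∨ y ∈ RInf R
  · simp [SRel, PRel, h]
  · simp [SRel, PRel, h]

lemma ueRel_or {A : Type*} (R : A → A → Prop) (u v : Ultrafilter A) :
    ueRel R u v ↔ ueRel (SRel R) u v ∨ ueRel (PRel R) u v := by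
  constructor
  · intro hR
    by_cases hS : ueRel (SRel R) u v
    · exact Or.inl hS
    · right
      simp only [ueRel, not_forall] at hS
      obtain ⟨X, hXv, hXu⟩ := hS
      intro Y hYv
      have hXY : X ∩ Y ∈ v := Filter.inter_mem hXv hYv
      have hRXY := hR _ hXY
      have hsplit : {w | ∃ s ∈ X ∩ Y, R w s} ⊆
          {w | ∃ s ∈ X, SRel R w s} ∪ {w | ∃ s ∈ Y, PRel R w s} := by
        rintro w ⟨s, ⟨hsX, hsY⟩, hRs⟩
        rcases (R_iff R w s).mp hRs with h | h
        · exact Or.inl ⟨s, hsX, h⟩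
        · exact Or.inr ⟨s, hsY, h⟩
      have hmem : {w | ∃ s ∈ X, SRel R w s} ∪ {w | ∃ s ∈ Y, PRel R w s} ∈ u :=
        Filter.mem_of_superset hRXY hsplit
      rcases (Ultrafilter.union_mem_iff).mp hmem with h | h
      · exact absurd h hXu
      · exact h
  · rintro (hS | hP) <;> intro X hX
    · exact Filter.mem_of_superset (hS X hX) fun w ⟨s, hs, h⟩ => ⟨s, hs, h.1⟩
    · exact Filter.mem_of_superset (hP X hX) fun w ⟨s, hs, h⟩ => ⟨s, hs, h.1⟩

lemma upRel_or {A I : Type*} (R : A → A → Prop) (𝒟 : Ultrafilter I)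
    (a b : UP 𝒟 A) :
    upRel 𝒟 R a b ↔ upRel 𝒟 (SRel R) a b ∨ upRel 𝒟 (PRel R) a b := by
  induction a using Quotient.inductionOn with | h a =>
  induction b using Quotient.inductionOn with | h b =>
  show {i | R (a i) (b i)} ∈ 𝒟 ↔ {i | SRel R (a i) (b i)} ∈ 𝒟 ∨ {i | PRel R (a i) (b i)} ∈ 𝒟
  rw [← Ultrafilter.union_mem_iff]
  have : {i | R (a i) (b i)} = {i | SRel R (a i) (b i)} ∪ {i | PRel R (a i) (b i)} := by
    ext i; exact R_iff R (a i) (b i)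
  rw [this]

lemma realize_tmap {Co B α : Type*} (cs : Co → B) (Q : B → B → Prop)
    (rs : Bool → B → B → Prop) (t : (Lang Co Unit).Term α) (v : α → B) :
    @Language.Term.realize _ _ (mkStruct cs rs) _ v (tmap t) =
    @Language.Term.realize _ _ (mkStruct cs fun _ => Q) _ v t := by
  induction t with
  | var x => rfl
  | @func n f ts ih =>
    match n, f with
    | 0, c => rfl
    | m + 1, f => exact PEmpty.elim f

lemma realize_fmap {Co B : Type*} (cs : Co → B) (Q Q1 Q2 : B → B → Prop)
    (hQ : ∀ x y, Q x y ↔ Q1 x y ∨ Q2 x y) {α : Type*} {n : ℕ}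
    (φ : (Lang Co Unit).BoundedFormula α n) : ∀ (v : α → B) (xs : Fin n → B),
    @Language.BoundedFormula.Realize _ _ (mkStruct cs fun _ => Q) _ _ φ v xs ↔
    @Language.BoundedFormula.Realize _ _ (mkStruct cs fun b => cond b Q1 Q2) _ _
      (fmap φ) v xs := by
  letI S1 : (Lang Co Unit).Structure B := mkStruct cs fun _ => Q
  letI S2 : (Lang Co Bool).Structure B := mkStruct cs fun b => cond b Q1 Q2
  induction φ with
  | falsum => intro v xs; rfl
  | equal t₁ t₂ =>
    intro v xs
    show Language.Term.realize (Sum.elim v xs) t₁ = Language.Term.realize (Sum.elim v xs) t₂ ↔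
      Language.Term.realize (Sum.elim v xs) (tmap t₁) =
        Language.Term.realize (Sum.elim v xs) (tmap t₂)
    rw [realize_tmap cs Q _ t₁, realize_tmap cs Q _ t₂]
  | @rel n l r ts =>
    match l, r with
    | 2, r =>
      intro v xs
      show _ ↔ Language.BoundedFormula.Realize (_ ⊔ _) v xs
      rw [Language.BoundedFormula.realize_sup]
      show Q (Language.Term.realize (Sum.elim v xs) (ts 0))
          (Language.Term.realize (Sum.elim v xs) (ts 1)) ↔
        Q1 (Language.Term.realize (Sum.elim v xs) (tmap (ts 0)))
          (Language.Term.realize (Sum.elim v xs) (tmap (ts 1))) ∨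
        Q2 (Language.Term.realize (Sum.elim v xs) (tmap (ts 0)))
          (Language.Term.realize (Sum.elim v xs) (tmap (ts 1)))
      rw [realize_tmap cs Q _ (ts 0), realize_tmap cs Q _ (ts 1)]
      exact hQ _ _
    | 0, r => exact PEmpty.elim r
    | 1, r => exact PEmpty.elim r
    | (m + 3), r => exact PEmpty.elim r
  | imp f₁ f₂ ih₁ ih₂ =>
    intro v xs
    show (_ → _) ↔ Language.BoundedFormula.Realize (Language.BoundedFormula.imp _ _) v xs
    simp only [Language.BoundedFormula.realize_imp]
    exact imp_congr (ih₁ v xs) (ih₂ v xs)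
  | all f ih =>
    intro v xs
    show _ ↔ Language.BoundedFormula.Realize (Language.BoundedFormula.all _) v xs
    simp only [Language.BoundedFormula.realize_all]
    exact forall_congr' fun x => ih v _

theorem transfer_sharp {A I : Type*} [Infinite I] (R : A → A → Prop)
    (𝒟 : Ultrafilter I) (h : AlmostBounded R) :
    (∀ (k : ℕ) (φ : (Lang (RInf R) Unit).Formula (Fin k)) (a : Fin k → UP 𝒟 A),
      @Language.Formula.Realize _ _ (structRup R 𝒟) _ φ a ↔
      @Language.Formula.Realize _ _ (structSPup R 𝒟) _ (fmap φ) a) ∧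
    (∀ (k : ℕ) (φ : (Lang (RInf R) Unit).Formula (Fin k)) (u : Fin k → Ultrafilter A),
      @Language.Formula.Realize _ _ (structRue R) _ φ u ↔
      @Language.Formula.Realize _ _ (structSPue R) _ (fmap φ) u) := by
  constructor
  · intro k φ a
    exact realize_fmap (Co := (RInf R : Set A)) (fun c => diag 𝒟 (c : A)) (upRel 𝒟 R)
      (upRel 𝒟 (SRel R)) (upRel 𝒟 (PRel R)) (upRel_or R 𝒟) φ a default
  · intro k φ u
    exact realize_fmap (Co := (RInf R : Set A)) (fun c => (pure (c : A) : Ultrafilter A))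
      (ueRel R) (ueRel (SRel R)) (ueRel (PRel R)) (ueRel_or R) φ u default

end UEx
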